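/- arXiv:2104.14887 — 2 statements merged into one kernel-verified Lean document; each statement's English description precedes it below -/
import Mathlib

section
/- The creating subject axioms imply the weak Kripke schema: from decidability of □ₙA, the axiom A → ¬¬∃n □ₙA, the axiom ∃n □ₙA → A, and a comprehension principle yielding the characteristic function of n ↦ □ₙA, one can construct β : ℕ → ℕ with (¬A ↔ ∀ n, β n = 0) and (∃ n, β n ≠ 0) → A. -/
/-- The creating subject axioms CS1–CS3 together with comprehension for the
characteristic function of `n ↦ B n` yield the weak Kripke schema for `A`. -/
theorem creating_subject_implies_weak_ks (A : Prop) (B : ℕ → Prop)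
    (CS1 : ∀ n, B n ∨ ¬ B n)
    (CS2 : A → ¬¬∃ n, B n)
    (CS3 : (∃ n, B n) → A)
    (β : ℕ → ℕ)
    (hβ : ∀ n, (β n = 1 ↔ B n) ∧ (β n = 0 ↔ ¬ B n)) :
    (¬A ↔ ∀ n, β n = 0) ∧ ((∃ n, β n ≠ 0) → A) := by
  constructor
  · constructor
    · intro hnA n
      exact (hβ n).2.mpr (fun hb => hnA (CS3 ⟨n, hb⟩))
    · intro h hA
      exact CS2 hA (fun ⟨n, hb⟩ => (hβ n).2.mp (h n) hb)
  · rintro ⟨n, hn⟩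
    rcases CS1 n with hb | hnb
    · exact CS3 ⟨n, hb⟩
    · exact absurd ((hβ n).2.mpr hnb) hn
end

section
/- Claim i of Kreisel's refutation of GMP: under the creating subject axiom CS2 applied to the statement ∀x βx = 0, if α tracks the stages in the sense ∀ m, (α m = 0 ↔ ((∃ x < m, β x ≠ 0) ∨ B m)), then ¬¬∃ n, α n = 0. -/
/-- Claim i of Kreisel's refutation of GMP: from the tracking condition and the
CS2 instance for `∀ x, β x = 0` one gets `¬¬∃ n, α n = 0`. -/
theorem kreisel_claim_i (α β : ℕ → ℕ) (B : ℕ → Prop)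
    (tracking : ∀ m, α m = 0 ↔ ((∃ x < m, β x ≠ 0) ∨ B m))
    (CS2 : (∀ x, β x = 0) → ¬¬∃ n, B n) :
    ¬¬∃ n, α n = 0 := by
  intro h
  have hβ : ∀ x, β x = 0 := by
    intro x
    by_contra hx
    exact h ⟨x + 1, (tracking (x + 1)).2 (Or.inl ⟨x, Nat.lt_succ_self x, hx⟩)⟩
  exact CS2 hβ (fun ⟨n, hn⟩ => h ⟨n, (tracking n).2 (Or.inr hn)⟩)
end
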